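/- arXiv:1608.00417 — 3 statements merged into one kernel-verified Lean document; each statement's English description precedes it below -/
import Mathlib

section
/- Let x : ℕ → Bool be an infinite binary sequence (x i denoting the i-th bit for i ≥ 1) and let p_x = ∑_{i=1}^∞ (4·[x i] + 1)/8^i, where [b] = 1 if b is true and 0 otherwise (so p_x is the real number with binary expansion 0.x₁01x₂01x₃01⋯, and 1/7 ≤ p_x ≤ 5/7). For every k ≥ 1, if X is a random variable distributed according to the binomial distribution with 64^k trials and success probability p_x (e.g. the PMF `PMF.binomial` on Fin (64^k + 1)), then the probability that the binary digit of X at position 3k+2 (i.e. Nat.testBit X (3k+2)) equals x k is at least 3/4. -/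
/-!
In octal, `p_x = 0.d₁d₂d₃…` with `dᵢ = 4xᵢ + 1 = octDigit (x i)`. Hence
`64ᵏ p_x = 8²ᵏ p_x = M + r` with `M = octPrefix x (2k)` and `0 ≤ r ≤ 1`. By Chebyshev's inequality
the number of heads `X` satisfies `|X - 64ᵏ p_x| < 8ᵏ` except with probability at most
`64ᵏ p_x (1 - p_x) / 64ᵏ ≤ 1/4`. Such an `X` lies within `8ᵏ` of `M`, so its octal digit at
position `k` is `4xₖ`, `4xₖ + 1` or `4xₖ + 2`, whose bit of weight 4 (binary position `3k + 2`)
is `xₖ`.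
-/

open scoped ENNReal
open Finset

set_option linter.deprecated false

noncomputable def coinProb (x : ℕ → Bool) : ℝ :=
  ∑' i : ℕ, (4 * (if x (i + 1) then (1 : ℝ) else 0) + 1) / 8 ^ (i + 1)

def octDigit (b : Bool) : ℕ := 4 * b.toNat + 1

def octPrefix (x : ℕ → Bool) : ℕ → ℕ
  | 0 => 0
  | n + 1 => 8 * octPrefix x n + octDigit (x (n + 1))

lemma cast_octDigit (b : Bool) : (octDigit b : ℝ) = 4 * (if b then 1 else 0) + 1 := by
  cases b <;> norm_num [octDigit]

lemma octDigit_le_seven (b : Bool) : octDigit b ≤ 7 := by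
  cases b <;> decide

lemma eight_mul_add_octDigit (q : ℕ) (b : Bool) : 8 * q + octDigit b = 4 * Nat.bit b q + 1 := by
  rw [Nat.bit_val, octDigit]; ring

namespace coinProb

lemma term_nonneg (x : ℕ → Bool) (i : ℕ) :
    0 ≤ (4 * (if x (i + 1) then (1 : ℝ) else 0) + 1) / 8 ^ (i + 1) := by
  split_ifs <;> positivity

lemma term_le (x : ℕ → Bool) (i : ℕ) :
    (4 * (if x (i + 1) then (1 : ℝ) else 0) + 1) / 8 ^ (i + 1) ≤ 7 / 8 * (1 / 8) ^ i := by
  rw [← cast_octDigit, div_le_iff₀ (by positivity), one_div_pow, pow_succ]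
  have : (octDigit (x (i + 1)) : ℝ) ≤ 7 := by exact_mod_cast octDigit_le_seven _
  field_simp
  linarith

lemma summable (x : ℕ → Bool) :
    Summable fun i : ℕ => (4 * (if x (i + 1) then (1 : ℝ) else 0) + 1) / 8 ^ (i + 1) :=
  .of_nonneg_of_le (term_nonneg x) (term_le x)
    ((summable_geometric_of_lt_one (by norm_num) (by norm_num)).mul_left _)

end coinProb

lemma coinProb_nonneg (x : ℕ → Bool) : 0 ≤ coinProb x :=
  tsum_nonneg (coinProb.term_nonneg x)

lemma coinProb_le_one (x : ℕ → Bool) : coinProb x ≤ 1 := by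
  calc coinProb x ≤ ∑' i : ℕ, 7 / 8 * (1 / 8 : ℝ) ^ i :=
        (coinProb.summable x).tsum_le_tsum (coinProb.term_le x)
          ((summable_geometric_of_lt_one (by norm_num) (by norm_num)).mul_left _)
    _ = 1 := by rw [tsum_mul_left, tsum_geometric_of_lt_one (by norm_num) (by norm_num)]; norm_num

lemma eight_mul_coinProb (x : ℕ → Bool) :
    8 * coinProb x = octDigit (x 1) + coinProb (fun j => x (j + 1)) := by
  rw [coinProb, (coinProb.summable x).tsum_eq_zero_add, mul_add, ← tsum_mul_left, cast_octDigit,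
    coinProb]
  congr 1
  · ring
  · congr 1; funext i; rw [pow_succ _ (i + 1)]; field_simp

lemma eight_pow_mul_coinProb (x : ℕ → Bool) (n : ℕ) :
    8 ^ n * coinProb x = octPrefix x n + coinProb (fun j => x (j + n)) := by
  induction n with
  | zero => simp [octPrefix]
  | succ n ih =>
    rw [pow_succ', mul_assoc, ih, mul_add, eight_mul_coinProb, octPrefix]
    simp only [Nat.cast_add, Nat.cast_mul, Nat.cast_ofNat, add_assoc, Nat.add_comm 1 n]

lemma octPrefix_lt (x : ℕ → Bool) (n : ℕ) : octPrefix x n < 8 ^ n := by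
  induction n with
  | zero => simp [octPrefix]
  | succ n ih => rw [octPrefix, pow_succ]; have := octDigit_le_seven (x (n + 1)); omega

lemma octPrefix_add (x : ℕ → Bool) (n m : ℕ) :
    octPrefix x (n + m) = octPrefix x n * 8 ^ m + octPrefix (fun j => x (j + n)) m := by
  induction m with
  | zero => simp [octPrefix]
  | succ m ih =>
    rw [← add_assoc, octPrefix, ih, octPrefix, pow_succ, show n + m + 1 = m + 1 + n by omega]
    ring

lemma Nat.testBit_add_two_of_near {q L m j : ℕ} (hL : L < 2 ^ j)
    (hlo : (4 * q + 1) * 2 ^ j + L < m + 2 ^ j) (hhi : m ≤ (4 * q + 1) * 2 ^ j + L + 2 ^ j) :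
    m.testBit (j + 2) = q.testBit 0 := by
  have hdiv : m / 2 ^ (j + 2) = q := by
    rw [pow_add] at *
    apply Nat.div_eq_of_lt_le <;> nlinarith
  rw [← zero_add (j + 2), Nat.testBit_add, hdiv]

lemma octPrefix_two_mul_succ (x : ℕ → Bool) (j : ℕ) :
    octPrefix x (2 * (j + 1)) = (4 * Nat.bit (x (j + 1)) (octPrefix x j) + 1) * 8 ^ (j + 1)
      + octPrefix (fun i => x (i + (j + 1))) (j + 1) := by
  rw [two_mul, octPrefix_add, octPrefix.eq_2 x j, eight_mul_add_octDigit]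

lemma testBit_eq_of_abs_sub_lt (x : ℕ → Bool) {k m : ℕ} (hk : 1 ≤ k)
    (h : |(64 : ℝ) ^ k * coinProb x - m| < 8 ^ k) : m.testBit (3 * k + 2) = x k := by
  obtain ⟨j, rfl⟩ : ∃ j, k = j + 1 := ⟨k - 1, by omega⟩
  set q := Nat.bit (x (j + 1)) (octPrefix x j)
  set L := octPrefix (fun i => x (i + (j + 1))) (j + 1)
  set r := coinProb (fun i => x (i + 2 * (j + 1)))
  have hscale : (64 : ℝ) ^ (j + 1) * coinProb x = ((4 * q + 1) * 8 ^ (j + 1) + L : ℕ) + r := by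
    rw [← octPrefix_two_mul_succ, ← eight_pow_mul_coinProb, pow_mul]; norm_num
  have hr0 : 0 ≤ r := coinProb_nonneg _
  have hr1 : r ≤ 1 := coinProb_le_one _
  rw [hscale, abs_lt] at h
  have hlo : (4 * q + 1) * 8 ^ (j + 1) + L < m + 8 ^ (j + 1) := by
    exact_mod_cast (by linarith : (((4 * q + 1) * 8 ^ (j + 1) + L : ℕ) : ℝ) < m + 8 ^ (j + 1))
  have hhi : m < (4 * q + 1) * 8 ^ (j + 1) + L + 8 ^ (j + 1) + 1 := by
    exact_mod_cast
      (by linarith : (m : ℝ) < ((4 * q + 1) * 8 ^ (j + 1) + L : ℕ) + 8 ^ (j + 1) + 1)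
  have hL := octPrefix_lt (fun i => x (i + (j + 1))) (j + 1)
  have h8 : (8 : ℕ) ^ (j + 1) = 2 ^ (3 * (j + 1)) := by rw [pow_mul]; norm_num
  rw [h8] at hlo hhi hL
  rw [← Nat.testBit_bit_zero (x (j + 1)) (octPrefix x j)]
  exact Nat.testBit_add_two_of_near hL hlo (Nat.le_of_lt_succ hhi)

lemma Finset.sum_filter_le_sum_mul_div {ι R : Type*} [Field R] [LinearOrder R]
    [IsStrictOrderedRing R] (s : Finset ι) {w g : ι → R}
    (hw : ∀ i ∈ s, 0 ≤ w i) (hg : ∀ i ∈ s, 0 ≤ g i) {d : R} (hd : 0 < d) :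
    ∑ i ∈ s with d ≤ g i, w i ≤ (∑ i ∈ s, w i * g i) / d := by
  rw [le_div_iff₀ hd, sum_mul]
  calc ∑ i ∈ s with d ≤ g i, w i * d ≤ ∑ i ∈ s with d ≤ g i, w i * g i :=
        sum_le_sum fun i hi => by
          rw [mem_filter] at hi; exact mul_le_mul_of_nonneg_left hi.2 (hw i hi.1)
    _ ≤ ∑ i ∈ s, w i * g i :=
        sum_le_sum_of_subset_of_nonneg (filter_subset _ _)
          fun i hi _ => mul_nonneg (hw i hi) (hg i hi)

lemma sum_binomial_weight {R : Type*} [CommRing R] (p : R) (n : ℕ) :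
    ∑ m ∈ range (n + 1), n.choose m * p ^ m * (1 - p) ^ (n - m) = 1 := by
  have h := add_pow p (1 - p) n
  rw [add_sub_cancel, one_pow] at h
  exact (sum_congr rfl fun m _ => by ring).trans h.symm

lemma sum_binomial_weight_mul_sq {R : Type*} [CommRing R] (p : R) (n : ℕ) :
    ∑ m ∈ range (n + 1), n.choose m * p ^ m * (1 - p) ^ (n - m) * (n * p - m) ^ 2
      = n * p * (1 - p) := by
  have h := congrArg (Polynomial.eval p) (bernsteinPolynomial.variance R n)
  simp only [Polynomial.eval_finset_sum, Polynomial.eval_mul, Polynomial.eval_pow,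
    Polynomial.eval_sub, Polynomial.eval_natCast, Polynomial.eval_X, Polynomial.eval_one,
    bernsteinPolynomial, nsmul_eq_mul] at h
  rw [← h]
  exact sum_congr rfl fun m _ => by ring

lemma one_sub_le_sum_binomial_of_near {p : ℝ} (hp0 : 0 ≤ p) (hp1 : p ≤ 1) {n : ℕ} {d : ℝ}
    (hd : 0 < d) {Q : ℕ → Prop} [DecidablePred Q] (hQ : ∀ m : ℕ, |n * p - m| < d → Q m) :
    1 - n * p * (1 - p) / d ^ 2
      ≤ ∑ m ∈ range (n + 1) with Q m, n.choose m * p ^ m * (1 - p) ^ (n - m) := by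
  set w : ℕ → ℝ := fun m => n.choose m * p ^ m * (1 - p) ^ (n - m)
  have hw : ∀ m ∈ range (n + 1), 0 ≤ w m := fun m _ => by
    have : 0 ≤ 1 - p := by linarith
    positivity
  have hfar : ∑ m ∈ range (n + 1) with ¬Q m, w m
      ≤ ∑ m ∈ range (n + 1) with d ^ 2 ≤ (n * p - ((m : ℕ) : ℝ)) ^ 2, w m := by
    refine sum_le_sum_of_subset_of_nonneg (monotone_filter_right _ fun m _ hm => ?_)
      fun m hm _ => hw m (mem_filter.mp hm).1
    have := not_lt.mp (mt (hQ m) hm)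
    exact sq_le_sq.mpr (by rwa [abs_of_pos hd])
  have hmarkov := (range (n + 1)).sum_filter_le_sum_mul_div hw
    (fun m _ => sq_nonneg ((n : ℝ) * p - m)) (pow_pos hd 2)
  rw [sum_binomial_weight_mul_sq] at hmarkov
  have htotal := sum_filter_add_sum_filter_not (range (n + 1)) Q w
  rw [sum_binomial_weight] at htotal
  linarith

lemma PMF.binomial_toOuterMeasure_setOf_val (q : NNReal) (h : q ≤ 1) (n : ℕ) (Q : ℕ → Prop)
    [DecidablePred Q] :
    (PMF.binomial q h n).toOuterMeasure {m | Q m.val}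
      = ENNReal.ofReal
          (∑ m ∈ range (n + 1) with Q m, n.choose m * (q : ℝ) ^ m * (1 - q) ^ (n - m)) := by
  have hq : (0 : ℝ) ≤ 1 - q := sub_nonneg.mpr (by exact_mod_cast h)
  rw [ENNReal.ofReal_sum_of_nonneg fun m _ => by positivity, sum_filter,
    ← Fin.sum_univ_eq_sum_range (fun m => if Q m then _ else 0), toOuterMeasure_apply_fintype]
  refine sum_congr rfl fun i _ => ?_
  rw [Set.indicator_apply, PMF.binomial_apply_of_le (Fin.is_le i) h]
  simp

/-- If a biased coin lands heads with probability
`p_x = 0.x₁01x₂01x₃01⋯` (binary), then after `64^k` tosses the binary digit of the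
number of heads at position `3k+2` equals `x k` with probability at least `3/4`. -/
theorem binomial_testBit_eq_bit_prob_ge
    (x : ℕ → Bool)
    (p : ℝ)
    (hp : p = ∑' i : ℕ, (4 * (if x (i + 1) then (1 : ℝ) else 0) + 1) / 8 ^ (i + 1))
    (hple : ENNReal.ofReal p ≤ 1)
    (k : ℕ) (hk : 1 ≤ k) :
    (3 : ℝ≥0∞) / 4 ≤
      (PMF.binomial (Real.toNNReal p) (ENNReal.coe_le_one_iff.mp hple) (64 ^ k)).toOuterMeasure
        {m : Fin (64 ^ k + 1) | Nat.testBit m.val (3 * k + 2) = x k} := by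
  have hpx : p = coinProb x := hp
  have hp0 : 0 ≤ p := hpx ▸ coinProb_nonneg x
  have hp1 : p ≤ 1 := hpx ▸ coinProb_le_one x
  rw [PMF.binomial_toOuterMeasure_setOf_val _ _ _ (fun m => m.testBit (3 * k + 2) = x k),
    Real.coe_toNNReal _ hp0]
  have hnear := one_sub_le_sum_binomial_of_near hp0 hp1 (n := 64 ^ k) (d := 8 ^ k)
    (by positivity) (Q := fun m => m.testBit (3 * k + 2) = x k)
    fun m hm => testBit_eq_of_abs_sub_lt x hk (by rw [← hpx]; exact_mod_cast hm)
  have hvar : ((64 ^ k : ℕ) : ℝ) * p * (1 - p) / (8 ^ k) ^ 2 ≤ 1 / 4 := by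
    have h64 : ((64 ^ k : ℕ) : ℝ) = (8 ^ k) ^ 2 := by
      rw [← pow_mul, mul_comm, pow_mul]; norm_num
    rw [h64, mul_assoc, mul_div_cancel_left₀ _ (by positivity)]
    nlinarith [sq_nonneg (2 * p - 1)]
  calc (3 : ℝ≥0∞) / 4 = ENNReal.ofReal (3 / 4) := by
        rw [ENNReal.ofReal_div_of_pos (by norm_num)]; norm_num
    _ ≤ _ := ENNReal.ofReal_le_ofReal (by linarith)
end

section
/- Let x : ℕ → Bool be an infinite binary sequence (x i denoting the i-th bit for i ≥ 1) and let p_x = ∑_{i=1}^∞ (4·[x i] + 1)/8^i, where [b] = 1 if b is true and 0 otherwise. Then for every k ≥ 1 and every natural number m, if |(m : ℝ) − 64^k · p_x| ≤ 8^k, then the binary digit of m at position 3k+2 equals x k, i.e. Nat.testBit m (3k+2) = x k. -/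
/-!
In base 8 the digits of `p_x` are `4 [x i] + 1 ∈ {1, 5}`, so `8^k p_x = 8 P + 4 [x k] + 1 + t`
with `P ∈ ℕ` and `t ∈ [0, 1]`. The hypothesis then puts `⌊m / 8^k⌋` in
`[8 P + 4 [x k], 8 P + 4 [x k] + 3]`, and bit 2 of every number there is `x k`; it is bit `3k + 2`
of `m`.
-/

namespace Real

variable {b : ℕ}

def ofDigitsPrefix (a : ℕ → Fin b) : ℕ → ℕ
  | 0 => 0
  | n + 1 => b * ofDigitsPrefix a n + a n

theorem natCast_mul_ofDigits (a : ℕ → Fin b) :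
    (b : ℝ) * ofDigits a = a 0 + ofDigits (fun i ↦ a (i + 1)) := by
  have hb : (b : ℝ) ≠ 0 := by exact_mod_cast (Fin.pos (a 0)).ne'
  rw [ofDigits_eq_sum_add_ofDigits a 1]
  simp only [Finset.range_one, Finset.sum_singleton, ofDigitsTerm, zero_add, pow_one]
  field_simp

theorem pow_mul_ofDigits (a : ℕ → Fin b) (n : ℕ) :
    (b : ℝ) ^ n * ofDigits a = ofDigitsPrefix a n + ofDigits (fun i ↦ a (i + n)) := by
  induction n with
  | zero => simp [ofDigitsPrefix]
  | succ n ih =>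
    rw [pow_succ', mul_assoc, ih, mul_add, natCast_mul_ofDigits, ofDigitsPrefix]
    simp only [zero_add, add_assoc, add_right_comm _ 1 n]
    push_cast
    ring

end Real

theorem Nat.le_div_add_one_and_div_le_add_two {m n N : ℕ} {t : ℝ} (hn : 0 < n) (ht₀ : 0 ≤ t)
    (ht₁ : t ≤ 1) (h : |(m : ℝ) - n * (N + t)| ≤ n) : N ≤ m / n + 1 ∧ m / n ≤ N + 2 := by
  obtain ⟨hlo, hhi⟩ := abs_le.mp h
  have hlo' : N * n ≤ m + n := by
    exact_mod_cast (by nlinarith : (N : ℝ) * n ≤ m + n)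
  have hhi' : m ≤ n * (N + 2) := by
    exact_mod_cast (by nlinarith : (m : ℝ) ≤ n * (N + 2))
  refine ⟨?_, Nat.div_le_of_le_mul hhi'⟩
  rw [← Nat.add_div_right m hn]
  exact (Nat.le_div_iff_mul_le hn).mpr hlo'

theorem Nat.testBit_two_eq_of_le_of_le {c q : ℕ} {b : Bool} (h₁ : 8 * c + 4 * b.toNat ≤ q)
    (h₂ : q ≤ 8 * c + 4 * b.toNat + 3) : q.testBit 2 = b := by
  have hq : q / 2 ^ 2 = 2 * c + b.toNat := by omega
  rw [← zero_add 2, ← Nat.testBit_div_two_pow, hq, Nat.testBit_zero]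
  cases b <;> simp

/-- Deterministic core of Lemma 1: if a natural number `m` differs from
`64^k · p_x` by at most `8^k`, where `p_x = 0.x₁01x₂01x₃01⋯` in binary, then the binary
digit of `m` at position `3k+2` equals `x k`. -/
theorem testBit_eq_of_close_to_binomial_mean
    (x : ℕ → Bool)
    (p : ℝ)
    (hp : p = ∑' i : ℕ, (4 * (if x (i + 1) then (1 : ℝ) else 0) + 1) / 8 ^ (i + 1))
    (k : ℕ) (hk : 1 ≤ k) (m : ℕ)
    (hm : |(m : ℝ) - 64 ^ k * p| ≤ 8 ^ k) :
    Nat.testBit m (3 * k + 2) = x k := by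
  obtain ⟨j, rfl⟩ : ∃ j, k = j + 1 := ⟨k - 1, by omega⟩
  set a : ℕ → Fin 8 := fun i ↦ if x (i + 1) then 5 else 1
  have hpa : p = Real.ofDigits a := by
    rw [hp, Real.ofDigits]
    congr 1 with i
    simp only [Real.ofDigitsTerm, a]
    split_ifs <;> norm_num [div_eq_mul_inv]
  have hsplit : (64 : ℝ) ^ (j + 1) * p = (8 ^ (j + 1) : ℕ) *
      (Real.ofDigitsPrefix a (j + 1) + Real.ofDigits (fun i ↦ a (i + (j + 1)))) := by
    rw [← Real.pow_mul_ofDigits, hpa]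
    push_cast
    rw [← mul_assoc, ← mul_pow]
    norm_num
  rw [hsplit] at hm
  obtain ⟨hlo, hhi⟩ := Nat.le_div_add_one_and_div_le_add_two (n := 8 ^ (j + 1)) (by positivity)
    (Real.ofDigits_nonneg _) (Real.ofDigits_le_one _) (by exact_mod_cast hm)
  have hdigit : Real.ofDigitsPrefix a (j + 1) =
      8 * Real.ofDigitsPrefix a j + 4 * (x (j + 1)).toNat + 1 := by
    simp only [Real.ofDigitsPrefix, a]
    cases x (j + 1) <;> rfl
  have h8 : (8 : ℕ) ^ (j + 1) = 2 ^ (3 * (j + 1)) := by rw [pow_mul]; norm_num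
  rw [hdigit, h8] at hlo hhi
  rw [add_comm, ← Nat.testBit_div_two_pow]
  exact Nat.testBit_two_eq_of_le_of_le (c := Real.ofDigitsPrefix a j) (by omega) (by omega)
end

section
/- Let x : ℕ → ℝ be a sequence with x i ∈ {−1, 1} for every i ≥ 1, and let θ_x = 2π · ∑_{i=1}^∞ x i / 8^{i+1}. Then for every j ≥ 1 there exist an integer N and a real number δ with |δ| ≤ π/28 such that 8^j · θ_x = 2π·N + (π/4)·(x j) + δ. -/
open Real

/-! Write `V m = ∑ᵢ y (m + i) / 8^(i+1)` for the value of the tail of the expansion from digit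
`m` on, where `y i = x (i + 1)`. Then `θ = 2π · V 0 / 8` and `8 · V m = y m + V (m + 1)`, so shifting
`k = j - 1` times gives `8^k · V 0 = N + V k` with `N ∈ ℤ`, and one more shift splits `V k` into the
leading digit `y k / 8 = x j / 8` and the rest `V (k + 1) / 8`, of size at most `(1/7) / 8`. -/

noncomputable def digitTail (b : ℝ) (y : ℕ → ℝ) (m : ℕ) : ℝ :=
  ∑' i, y (m + i) / b ^ (i + 1)

section digitTail

variable {b : ℝ} {y : ℕ → ℝ}

lemma norm_div_pow_succ_le (hb : 1 < b) {a : ℝ} (ha : |a| ≤ 1) (i : ℕ) :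
    ‖a / b ^ (i + 1)‖ ≤ b⁻¹ * b⁻¹ ^ i := by
  have hb0 : 0 < b := by linarith
  rw [Real.norm_eq_abs, abs_div, abs_of_pos (pow_pos hb0 _), ← pow_succ', inv_pow,
    div_eq_mul_inv]
  exact mul_le_of_le_one_left (by positivity) ha

lemma summable_geometric_inv_of_one_lt (hb : 1 < b) : Summable fun i : ℕ => b⁻¹ * b⁻¹ ^ i :=
  (summable_geometric_of_lt_one (by positivity) (inv_lt_one_of_one_lt₀ hb)).mul_left _

lemma summable_digitTail (hb : 1 < b) (hy : ∀ i, |y i| ≤ 1) (m : ℕ) :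
    Summable fun i => y (m + i) / b ^ (i + 1) :=
  .of_norm_bounded (summable_geometric_inv_of_one_lt hb)
    fun i => norm_div_pow_succ_le hb (hy _) i

lemma abs_digitTail_le (hb : 1 < b) (hy : ∀ i, |y i| ≤ 1) (m : ℕ) :
    |digitTail b y m| ≤ 1 / (b - 1) := by
  have hb0 : b - 1 ≠ 0 := by linarith
  calc |digitTail b y m|
      ≤ ∑' i, ‖y (m + i) / b ^ (i + 1)‖ := norm_tsum_le_tsum_norm (summable_digitTail hb hy m).norm
    _ ≤ ∑' i : ℕ, b⁻¹ * b⁻¹ ^ i :=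
        (summable_digitTail hb hy m).norm.tsum_le_tsum (fun i => norm_div_pow_succ_le hb (hy _) i)
          (summable_geometric_inv_of_one_lt hb)
    _ = 1 / (b - 1) := by
        rw [tsum_mul_left, tsum_geometric_of_lt_one (by positivity) (inv_lt_one_of_one_lt₀ hb)]
        field_simp

lemma mul_digitTail (hb : 1 < b) (hy : ∀ i, |y i| ≤ 1) (m : ℕ) :
    b * digitTail b y m = y m + digitTail b y (m + 1) := by
  have hb0 : b ≠ 0 := by positivity
  rw [digitTail, (summable_digitTail hb hy m).tsum_eq_zero_add, mul_add, digitTail,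
    ← tsum_mul_left]
  congr 1
  · simp only [add_zero, zero_add, pow_one]
    field_simp
  · refine tsum_congr fun i => ?_
    rw [show m + 1 + i = m + (i + 1) by ring, pow_succ' b (i + 1)]
    field_simp

lemma exists_int_pow_mul_digitTail {b : ℤ} (hb : 1 < b) (hy : ∀ i, |y i| ≤ 1)
    (hy_int : ∀ i, ∃ n : ℤ, y i = n) (k : ℕ) :
    ∃ N : ℤ, (b : ℝ) ^ k * digitTail b y 0 = N + digitTail b y k := by
  induction k with
  | zero => exact ⟨0, by simp⟩
  | succ k ih =>
    obtain ⟨N, hN⟩ := ih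
    obtain ⟨n, hn⟩ := hy_int k
    refine ⟨b * N + n, ?_⟩
    have hshift := mul_digitTail (b := b) (by exact_mod_cast hb) hy k
    push_cast
    linear_combination (b : ℝ) * hN + hshift + hn

end digitTail

/-- For `θ_x = 2π · ∑_{i=1}^∞ x i / 8^{i+1}` with `x i ∈ {−1, 1}` for
`i ≥ 1`, rotating `8^j` times by `θ_x` accumulates an angle equal, modulo `2π`, to
`(π/4)·(x j)` up to a perturbation `δ` with `|δ| ≤ π/28`. -/
theorem adh_angle_decomposition
    (x : ℕ → ℝ) (hx : ∀ i : ℕ, 1 ≤ i → x i = 1 ∨ x i = -1)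
    (θ : ℝ) (hθ : θ = 2 * π * ∑' i : ℕ, x (i + 1) / 8 ^ (i + 2))
    (j : ℕ) (hj : 1 ≤ j) :
    ∃ (N : ℤ) (δ : ℝ), |δ| ≤ π / 28 ∧
      8 ^ j * θ = 2 * π * N + (π / 4) * x j + δ := by
  obtain ⟨k, rfl⟩ : ∃ k, j = k + 1 := ⟨j - 1, by omega⟩
  set y : ℕ → ℝ := fun i => x (i + 1)
  have hy : ∀ i, y i = 1 ∨ y i = -1 := fun i => hx (i + 1) (by omega)
  have hy_abs : ∀ i, |y i| ≤ 1 := fun i => by rcases hy i with h | h <;> simp [h]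
  have hy_int : ∀ i, ∃ n : ℤ, y i = n := fun i => by
    rcases hy i with h | h
    exacts [⟨1, by simp [h]⟩, ⟨-1, by simp [h]⟩]
  have hb : (1 : ℝ) < 8 := by norm_num
  have hθV : θ = 2 * π * (digitTail 8 y 0 / 8) := by
    rw [hθ, digitTail, ← tsum_div_const]
    congr 1
    refine tsum_congr fun i => ?_
    rw [zero_add, pow_succ, div_div]
  obtain ⟨N, hN⟩ := exists_int_pow_mul_digitTail (b := 8) (by norm_num) hy_abs hy_int k
  have hshift := mul_digitTail hb hy_abs k
  push_cast at hN
  refine ⟨N, 2 * π * (digitTail 8 y (k + 1) / 8), ?_, ?_⟩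
  · have hV := abs_digitTail_le hb hy_abs (k + 1)
    rw [abs_mul, abs_div, abs_of_pos (by positivity : (0 : ℝ) < 2 * π)]
    calc 2 * π * (|digitTail 8 y (k + 1)| / |8|) ≤ 2 * π * (1 / (8 - 1) / 8) := by
          gcongr; norm_num
      _ = π / 28 := by ring
  · linear_combination 8 ^ (k + 1) * hθV + 2 * π * hN + π / 4 * hshift
end
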